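/- arXiv:1905.07124 — 4 statements merged into one kernel-verified Lean document; each statement's English description precedes it below -/
import Mathlib

section
/- Let n ≥ 1, h = ⌊log₂ n⌋, and let t be a node with 1 ≤ t ≤ n and level ℓ = ⌊log₂ t⌋. Then the subtree size of t in the implicit binary tree on {1,…,n}, i.e., the number of integers s ∈ {1,…,n} with ⌊s/2^d⌋ = t for some d ≥ 0, equals (2^{h−ℓ} − 1) + min(2^{h−ℓ}, max(0, n − t·2^{h−ℓ} + 1)). (Thus the subtree size of any node can be computed from its index, its level, and n alone, which is the fact used to answer counting queries in the in-place k-d tree without storing subtree sizes.) -/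
private lemma stmt2_final (n P q c : ℕ) (hP : 1 ≤ P)
    (hc : c = (P - 1) + (min (n + 1) (q + P) - q)) :
    (c : ℤ) = ((P : ℤ) - 1) + min (P : ℤ) (max 0 ((n : ℤ) - q + 1)) := by omega

private lemma stmt2_geom (k : ℕ) : ∑ d ∈ Finset.range k, 2 ^ d = 2 ^ k - 1 := by
  induction k with
  | zero => simp
  | succ k ih =>
    rw [Finset.sum_range_succ, ih, pow_succ]
    have : 1 ≤ 2 ^ k := Nat.one_le_two_pow
    omega

theorem stmt2 (n t : ℕ) (hn : 1 ≤ n) (ht : 1 ≤ t) (htn : t ≤ n) (h ℓ : ℕ)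
    (hh : h = Nat.log 2 n) (hℓ : ℓ = Nat.log 2 t) :
    (({s : ℕ | 1 ≤ s ∧ s ≤ n ∧ ∃ d : ℕ, s / 2 ^ d = t}).ncard : ℤ)
      = (2 ^ (h - ℓ) - 1) +
        min ((2 : ℤ) ^ (h - ℓ)) (max 0 ((n : ℤ) - (t : ℤ) * 2 ^ (h - ℓ) + 1)) := by
  set k := h - ℓ with hk
  have hℓh : ℓ ≤ h := by subst hh hℓ; exact Nat.log_mono_right htn
  have h2ℓ : 2 ^ ℓ ≤ t := hℓ ▸ Nat.pow_log_le_self 2 (by omega)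
  have ht2 : t < 2 ^ (ℓ + 1) := hℓ ▸ Nat.lt_pow_succ_log_self (by norm_num) t
  have h2h : 2 ^ h ≤ n := hh ▸ Nat.pow_log_le_self 2 (by omega)
  have hn2 : n < 2 ^ (h + 1) := hh ▸ Nat.lt_pow_succ_log_self (by norm_num) n
  -- membership characterization
  have hdiv : ∀ s d : ℕ, s / 2 ^ d = t ↔ t * 2 ^ d ≤ s ∧ s < (t + 1) * 2 ^ d := by
    intro s d
    constructor
    · rintro rfl
      refine ⟨Nat.div_mul_le_self s (2 ^ d), ?_⟩
      have h1 := Nat.div_add_mod s (2 ^ d)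
      have h2 : s % 2 ^ d < 2 ^ d := Nat.mod_lt _ (Nat.two_pow_pos d)
      have h3 : (s / 2 ^ d + 1) * 2 ^ d = 2 ^ d * (s / 2 ^ d) + 2 ^ d := by ring
      omega
    · rintro ⟨h1, h2⟩
      exact Nat.div_eq_of_lt_le h1 h2
  let F : Finset ℕ := (Finset.range (k + 1)).biUnion
      (fun d => Finset.Ico (t * 2 ^ d) (min (n + 1) ((t + 1) * 2 ^ d)))
  have hSF : {s : ℕ | 1 ≤ s ∧ s ≤ n ∧ ∃ d : ℕ, s / 2 ^ d = t} = ↑F := by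
    ext s
    simp only [Set.mem_setOf_eq, Finset.coe_biUnion, Set.mem_iUnion, Finset.mem_coe,
      Finset.mem_Ico, Finset.mem_range, F, lt_min_iff]
    constructor
    · rintro ⟨hs1, hsn, d, hd⟩
      rw [hdiv] at hd
      refine ⟨d, ?_, hd.1, by omega, hd.2⟩
      by_contra hdk
      have hd2 : h + 1 ≤ ℓ + d := by omega
      have : 2 ^ (h + 1) ≤ 2 ^ ℓ * 2 ^ d := by
        rw [← pow_add]; exact Nat.pow_le_pow_right (by norm_num) hd2
      have : 2 ^ (h + 1) ≤ s := le_trans this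
        (le_trans (Nat.mul_le_mul_right _ h2ℓ) hd.1)
      omega
    · rintro ⟨d, hdk, h1, h2, h3⟩
      have hp : 1 ≤ 2 ^ d := Nat.one_le_two_pow
      refine ⟨by nlinarith, by omega, d, (hdiv s d).2 ⟨h1, h3⟩⟩
  rw [hSF, Set.ncard_coe_finset]
  have hdisj : ∀ x ∈ Finset.range (k + 1), ∀ y ∈ Finset.range (k + 1), x ≠ y →
      Disjoint (Finset.Ico (t * 2 ^ x) (min (n + 1) ((t + 1) * 2 ^ x)))
        (Finset.Ico (t * 2 ^ y) (min (n + 1) ((t + 1) * 2 ^ y))) := by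
    have key : ∀ x y : ℕ, x < y →
        Disjoint (Finset.Ico (t * 2 ^ x) (min (n + 1) ((t + 1) * 2 ^ x)))
          (Finset.Ico (t * 2 ^ y) (min (n + 1) ((t + 1) * 2 ^ y))) := by
      intro x y hxy
      rw [Finset.disjoint_left]
      intro a ha hb
      simp only [Finset.mem_Ico, lt_min_iff] at ha hb
      have : (t + 1) * 2 ^ x ≤ t * 2 ^ y := by
        calc (t + 1) * 2 ^ x ≤ (2 * t) * 2 ^ x := by nlinarith
          _ = t * 2 ^ (x + 1) := by ring
          _ ≤ t * 2 ^ y := Nat.mul_le_mul_left _ (Nat.pow_le_pow_right (by norm_num) hxy)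
      omega
    intro x hx y hy hxy
    rcases Nat.lt_or_ge x y with hlt | hge
    · exact key x y hlt
    · exact (key y x (by omega)).symm
  rw [Finset.card_biUnion hdisj, Finset.sum_range_succ]
  have hfull : ∀ d ∈ Finset.range k,
      (Finset.Ico (t * 2 ^ d) (min (n + 1) ((t + 1) * 2 ^ d))).card = 2 ^ d := by
    intro d hd
    rw [Finset.mem_range] at hd
    have hle : (t + 1) * 2 ^ d ≤ n + 1 := by
      have h1 : (t + 1) * 2 ^ d ≤ 2 ^ (ℓ + 1) * 2 ^ d := Nat.mul_le_mul_right _ (by omega)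
      have h2 : 2 ^ (ℓ + 1) * 2 ^ d ≤ 2 ^ h := by
        rw [← pow_add]; exact Nat.pow_le_pow_right (by norm_num) (by omega)
      omega
    rw [min_eq_right hle, Nat.card_Ico]
    have h3 : (t + 1) * 2 ^ d = t * 2 ^ d + 2 ^ d := by ring
    rw [h3, Nat.add_sub_cancel_left]
  rw [Finset.sum_congr rfl hfull, stmt2_geom, Nat.card_Ico]
  have hcast : ∀ m : ℕ, ((2 ^ m : ℕ) : ℤ) = (2 : ℤ) ^ m := by intro m; push_cast; ring
  have key := stmt2_final n (2 ^ k) (t * 2 ^ k)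
    (2 ^ k - 1 + (min (n + 1) ((t + 1) * 2 ^ k) - t * 2 ^ k)) Nat.one_le_two_pow
    (by have : (t + 1) * 2 ^ k = t * 2 ^ k + 2 ^ k := by ring
        rw [this])
  rw [key]
  push_cast
  ring
end

section
/- Let n ≥ 1, h = ⌊log₂ n⌋, κ = n − (2^h − 1), fix a level i with 0 ≤ i < h, and set k_i = ⌊κ/2^{h−i}⌋. For 1 ≤ j ≤ 2^i let t_j = 2^i + j − 1 denote the j-th leftmost node of level i. Then the subtree size of t_j in the implicit binary tree on {1,…,n} equals: 2^{h+1−i} − 1 if j ≤ k_i (a full subtree); 2^{h−i} − 1 + (κ − k_i·2^{h−i}) if j = k_i + 1 ≤ 2^i; and 2^{h−i} − 1 if k_i + 2 ≤ j ≤ 2^i. In particular, if k_i = 2^i (equivalently κ = 2^h) then every level-i subtree is full of size 2^{h+1−i} − 1, and otherwise level i consists, from left to right, of k_i roots of subtrees of size 2^{h+1−i} − 1, one root of a subtree of size 2^{h−i} − 1 + κ − k_i·2^{h−i}, and 2^i − k_i − 1 roots of subtrees of size 2^{h−i} − 1. -/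
/-!
The descendants of `t` at depth `d` are exactly the integers of `[t * 2 ^ d, (t + 1) * 2 ^ d)`,
and these intervals are pairwise disjoint. For a node `t` of level `i` in a tree of height `h`
(`2 ^ h ≤ n < 2 ^ (h + 1)`), the rows at depths `d < h - i` lie entirely in `{1, …, n}`, no row
below depth `h - i` meets it, and the row at depth `h - i` contributes
`min (2 ^ (h - i)) (κ - j 2 ^ (h - i))` nodes, where `t` is the `(j + 1)`-th node of its level.
Writing `κ = kᵢ 2 ^ (h - i) + r`, this is a full row for `j < kᵢ`, `r` nodes for `j = kᵢ` and
no node for `j > kᵢ`.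
-/

open Finset Function

def subtree (n t : ℕ) : Set ℕ := {s | 1 ≤ s ∧ s ≤ n ∧ ∃ d : ℕ, s / 2 ^ d = t}

lemma div_two_pow_eq_iff {s d t : ℕ} :
    s / 2 ^ d = t ↔ s ∈ Ico (t * 2 ^ d) ((t + 1) * 2 ^ d) := by
  have := Nat.two_pow_pos d
  rw [Nat.div_eq_iff this, mem_Ico, add_one_mul]
  omega

lemma pairwise_disjoint_Ico_mul_two_pow {t : ℕ} (ht : 1 ≤ t) :
    Pairwise (Disjoint on fun d ↦ Ico (t * 2 ^ d) ((t + 1) * 2 ^ d)) := by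
  refine (pairwise_disjoint_on _).mpr fun x y hlt ↦ ?_
  have hsep : (t + 1) * 2 ^ x ≤ t * 2 ^ y :=
    calc (t + 1) * 2 ^ x ≤ t * 2 ^ (x + 1) := by
          rw [pow_succ]; nlinarith [Nat.one_le_two_pow (n := x)]
      _ ≤ t * 2 ^ y := Nat.mul_le_mul_left _ (Nat.pow_le_pow_right two_pos hlt)
  refine Finset.disjoint_left.mpr fun s hsx hsy ↦ ?_
  rw [mem_Ico] at hsx hsy
  omega

lemma subtree_eq_biUnion {n t m : ℕ} (ht : 1 ≤ t) (hn : n < t * 2 ^ (m + 1)) :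
    subtree n t =
      ↑((range (m + 1)).biUnion fun d ↦ Ico (t * 2 ^ d) (min (n + 1) ((t + 1) * 2 ^ d))) := by
  ext s
  simp only [subtree, div_two_pow_eq_iff, Set.mem_ofPred_eq, coe_biUnion, mem_coe, mem_range,
    mem_Ico, Set.mem_iUnion, lt_min_iff, exists_prop]
  constructor
  · rintro ⟨-, hsn, d, hlo, hhi⟩
    refine ⟨d, ?_, hlo, by omega, hhi⟩
    by_contra! hd
    have : t * 2 ^ (m + 1) ≤ t * 2 ^ d := Nat.mul_le_mul_left _ (Nat.pow_le_pow_right two_pos hd)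
    omega
  · rintro ⟨d, -, hlo, hsn, hhi⟩
    exact ⟨(Nat.mul_pos ht (Nat.two_pow_pos d)).trans_le hlo, by omega, d, hlo, hhi⟩

lemma ncard_subtree {n t m : ℕ} (ht : 1 ≤ t) (hn : n < t * 2 ^ (m + 1)) :
    (subtree n t).ncard = ∑ d ∈ range (m + 1), min (2 ^ d) (n + 1 - t * 2 ^ d) := by
  have hdisj : (↑(range (m + 1)) : Set ℕ).PairwiseDisjoint
      fun d ↦ Ico (t * 2 ^ d) (min (n + 1) ((t + 1) * 2 ^ d)) :=
    Set.PairwiseDisjoint.mono ((pairwise_disjoint_Ico_mul_two_pow ht).set_pairwise _) fun d ↦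
      Ico_subset_Ico_right (min_le_right _ _)
  rw [subtree_eq_biUnion ht hn, Set.ncard_coe_finset, card_biUnion hdisj]
  refine sum_congr rfl fun d _ ↦ ?_
  rw [Nat.card_Ico, ← Nat.sub_min_sub_right, add_one_mul, Nat.add_sub_cancel_left, min_comm]

lemma ncard_subtree_of_level {n h i t : ℕ} (hnh : 2 ^ h ≤ n) (hnh' : n < 2 ^ (h + 1))
    (hi : i ≤ h) (ht : 2 ^ i ≤ t) (ht' : t < 2 ^ (i + 1)) :
    (subtree n t).ncard = 2 ^ (h - i) - 1 + min (2 ^ (h - i)) (n + 1 - t * 2 ^ (h - i)) := by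
  have hroot : n < t * 2 ^ (h - i + 1) :=
    calc n < 2 ^ i * 2 ^ (h - i + 1) := by
          rwa [← pow_add, ← Nat.add_assoc, Nat.add_sub_cancel' hi]
      _ ≤ t * 2 ^ (h - i + 1) := Nat.mul_le_mul_right _ ht
  have hfull : ∀ d ∈ range (h - i), min (2 ^ d) (n + 1 - t * 2 ^ d) = 2 ^ d := by
    intro d hd
    have : (t + 1) * 2 ^ d ≤ 2 ^ h :=
      calc (t + 1) * 2 ^ d ≤ 2 ^ (i + 1) * 2 ^ d := Nat.mul_le_mul_right _ ht'
        _ = 2 ^ (i + 1 + d) := (pow_add ..).symm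
        _ ≤ 2 ^ h := Nat.pow_le_pow_right two_pos (by rw [mem_range] at hd; omega)
    rw [add_one_mul] at this
    omega
  rw [ncard_subtree (by have := Nat.one_le_two_pow (n := i); omega) hroot, sum_range_succ,
    sum_congr rfl hfull, Nat.geomSum_eq le_rfl, Nat.div_one]

lemma min_sub_mul_of_lt_div {P κ j : ℕ} (hj : j < κ / P) : min P (κ - j * P) = P := by
  have : (j + 1) * P ≤ κ :=
    (Nat.mul_le_mul_right P hj).trans (Nat.div_mul_le_self κ P)
  rw [add_one_mul] at this
  omega

lemma min_sub_div_mul {P : ℕ} (κ : ℕ) (hP : 0 < P) : min P (κ - κ / P * P) = κ % P := by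
  rw [mul_comm, ← Nat.mod_eq_sub_mul_div]
  exact min_eq_right (Nat.mod_lt κ hP).le

lemma min_sub_mul_of_div_lt {P κ j : ℕ} (hP : 0 < P) (hj : κ / P < j) :
    min P (κ - j * P) = 0 := by
  have : κ < j * P := (Nat.lt_div_mul_add hP).trans_le <| by
    rw [← add_one_mul]; exact Nat.mul_le_mul_right P hj
  omega

theorem stmt3 (n : ℕ) (hn : 1 ≤ n) (h κ i kᵢ : ℕ)
    (hh : h = Nat.log 2 n) (hκ : κ = n - (2 ^ h - 1)) (hi : i < h)
    (hki : kᵢ = κ / 2 ^ (h - i)) :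
    ∀ j, 1 ≤ j → j ≤ 2 ^ i →
      (j ≤ kᵢ →
        ({s : ℕ | 1 ≤ s ∧ s ≤ n ∧ ∃ d : ℕ, s / 2 ^ d = 2 ^ i + j - 1}).ncard
          = 2 ^ (h + 1 - i) - 1) ∧
      (j = kᵢ + 1 →
        ({s : ℕ | 1 ≤ s ∧ s ≤ n ∧ ∃ d : ℕ, s / 2 ^ d = 2 ^ i + j - 1}).ncard
          = 2 ^ (h - i) - 1 + (κ - kᵢ * 2 ^ (h - i))) ∧
      (kᵢ + 2 ≤ j →
        ({s : ℕ | 1 ≤ s ∧ s ≤ n ∧ ∃ d : ℕ, s / 2 ^ d = 2 ^ i + j - 1}).ncard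
          = 2 ^ (h - i) - 1) := by
  intro j hj hj'
  have hnh : 2 ^ h ≤ n := hh ▸ Nat.pow_log_le_self 2 (by omega)
  have hnh' : n < 2 ^ (h + 1) := hh ▸ Nat.lt_pow_succ_log_self one_lt_two n
  have hsize : (subtree n (2 ^ i + j - 1)).ncard
      = 2 ^ (h - i) - 1 + min (2 ^ (h - i)) (κ - (j - 1) * 2 ^ (h - i)) := by
    have hoffset : (2 ^ i + j - 1) * 2 ^ (h - i) = 2 ^ h + (j - 1) * 2 ^ (h - i) := by
      rw [Nat.add_sub_assoc hj, add_mul, ← pow_add, Nat.add_sub_cancel' hi.le]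
    rw [ncard_subtree_of_level hnh hnh' hi.le (by omega) (by rw [pow_succ]; omega), hoffset]
    omega
  show (_ → (subtree n _).ncard = _) ∧ (_ → (subtree n _).ncard = _) ∧
    (_ → (subtree n _).ncard = _)
  rw [hsize, hki]
  refine ⟨fun hjk ↦ ?_, fun hjk ↦ ?_, fun hjk ↦ ?_⟩
  · rw [min_sub_mul_of_lt_div (by omega), show h + 1 - i = h - i + 1 by omega, pow_succ]
    omega
  · rw [show j - 1 = κ / 2 ^ (h - i) by omega, min_sub_div_mul κ (by positivity),
      Nat.mod_eq_sub_mul_div, mul_comm]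
  · rw [min_sub_mul_of_div_lt (by positivity) (by omega), add_zero]
end

section
/- Let n ≥ 2, h = ⌊log₂ n⌋, and κ = n − (2^h − 1). Then the subtree of node 2 (the left child of the root 1) in the implicit binary tree on {1,…,n} has exactly 2^{h−1} − 1 + min(κ, 2^{h−1}) nodes. Hence the rank (from the smallest) of the element that must be placed at the root so that its left subtree receives exactly the correct number of elements — the block-median rank used by the in-place k-d tree construction — equals 2^{h−1} + min(κ, 2^{h−1}). -/
/-!
The descendants of a node `t` at depth `d` are exactly the integers in `[t·2^d, (t+1)·2^d)`, and
for `t ≥ 1` the depth of a descendant is unique, so the subtree of `t` in `{1,…,n}` is the disjoint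
union of these layers cut off at `n`. For `t = 2` and `2^h ≤ n < 2^(h+1)` the layers of depth
`d < h - 1` are complete (`2^d` nodes each, `2^(h-1) - 1` in total) and the layer of depth `h - 1`,
which is `[2^h, 3·2^(h-1))`, is truncated at `n` and keeps `min(κ, 2^(h-1))` nodes.
-/

open Finset

namespace ImplicitBinaryTree

lemma div_two_pow_eq_iff {s t d : ℕ} :
    s / 2 ^ d = t ↔ s ∈ Ico (t * 2 ^ d) ((t + 1) * 2 ^ d) := by
  have hpos : 0 < 2 ^ d := by positivity
  rw [mem_Ico, ← Nat.le_div_iff_mul_le hpos, ← Nat.div_lt_iff_lt_mul hpos]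
  omega

lemma depth_unique {s t d₁ d₂ : ℕ} (ht : 1 ≤ t) (h₁ : s / 2 ^ d₁ = t) (h₂ : s / 2 ^ d₂ = t) :
    d₁ = d₂ := by
  have shallower_is_larger : ∀ {d d' : ℕ}, d < d' → s / 2 ^ d = t → s / 2 ^ d' < t := by
    intro d d' hlt hd
    obtain ⟨k, hk, rfl⟩ : ∃ k, k ≠ 0 ∧ d' = d + k := ⟨d' - d, by omega, by omega⟩
    rw [pow_add, ← Nat.div_div_eq_div_mul, hd]
    exact Nat.div_lt_self ht (Nat.one_lt_two_pow hk)
  rcases lt_trichotomy d₁ d₂ with hlt | heq | hgt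
  · exact absurd (shallower_is_larger hlt h₁) (by omega)
  · exact heq
  · exact absurd (shallower_is_larger hgt h₂) (by omega)

lemma descendants_eq_biUnion {n t D : ℕ} (ht : 1 ≤ t) (hD : n < t * 2 ^ D) :
    {s : ℕ | 1 ≤ s ∧ s ≤ n ∧ ∃ d : ℕ, s / 2 ^ d = t} =
      ↑((range D).biUnion fun d => Ico (t * 2 ^ d) (min ((t + 1) * 2 ^ d) (n + 1))) := by
  ext s
  simp only [Set.mem_ofPred_eq, coe_biUnion, mem_coe, mem_range, mem_Ico, lt_min_iff,
    Set.mem_iUnion, exists_prop, div_two_pow_eq_iff]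
  constructor
  · rintro ⟨-, hsn, d, hlo, hhi⟩
    have hdD : 2 ^ d < 2 ^ D :=
      Nat.lt_of_mul_lt_mul_left (a := t) (by linarith)
    exact ⟨d, (Nat.pow_lt_pow_iff_right (by norm_num)).mp hdD, hlo, hhi, by omega⟩
  · rintro ⟨d, -, hlo, hhi, hsn⟩
    have : 1 ≤ t * 2 ^ d := Nat.mul_pos ht (by positivity)
    exact ⟨by omega, by omega, d, hlo, hhi⟩

lemma ncard_descendants {n t D : ℕ} (ht : 1 ≤ t) (hD : n < t * 2 ^ D) :
    {s : ℕ | 1 ≤ s ∧ s ≤ n ∧ ∃ d : ℕ, s / 2 ^ d = t}.ncard =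
      ∑ d ∈ range D, (min ((t + 1) * 2 ^ d) (n + 1) - t * 2 ^ d) := by
  rw [descendants_eq_biUnion ht hD, Set.ncard_coe_finset, card_biUnion]
  · simp only [Nat.card_Ico]
  · intro d₁ _ d₂ _ hne
    refine disjoint_left.mpr fun s hs₁ hs₂ => hne (depth_unique (s := s) ht ?_ ?_) <;>
      rw [div_two_pow_eq_iff] <;> simp only [mem_Ico, lt_min_iff] at * <;> omega

lemma sum_layers_of_two {m n : ℕ} (hn : 2 ^ (m + 1) ≤ n) :
    ∑ d ∈ range (m + 1), (min (3 * 2 ^ d) (n + 1) - 2 * 2 ^ d) =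
      2 ^ m - 1 + min (n + 1 - 2 ^ (m + 1)) (2 ^ m) := by
  have full_layer : ∀ d ∈ range m, min (3 * 2 ^ d) (n + 1) - 2 * 2 ^ d = 2 ^ d := by
    intro d hd
    have : 2 ^ (d + 2) ≤ 2 ^ (m + 1) :=
      Nat.pow_le_pow_right (by norm_num) (by simp only [mem_range] at hd; omega)
    rw [pow_add] at this
    omega
  rw [sum_range_succ, sum_congr rfl full_layer, Nat.geomSum_eq le_rfl, pow_succ]
  rw [pow_succ] at hn
  simp only [Nat.add_one_sub_one, Nat.div_one]
  omega

end ImplicitBinaryTree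

open ImplicitBinaryTree in
theorem stmt5 (n : ℕ) (hn : 2 ≤ n) (h κ : ℕ)
    (hh : h = Nat.log 2 n) (hκ : κ = n - (2 ^ h - 1)) :
    ({s : ℕ | 1 ≤ s ∧ s ≤ n ∧ ∃ d : ℕ, s / 2 ^ d = 2}).ncard
      = 2 ^ (h - 1) - 1 + min κ (2 ^ (h - 1)) ∧
    ({s : ℕ | 1 ≤ s ∧ s ≤ n ∧ ∃ d : ℕ, s / 2 ^ d = 2}).ncard + 1
      = 2 ^ (h - 1) + min κ (2 ^ (h - 1)) := by
  have hpow : 2 ^ h ≤ n := hh ▸ Nat.pow_log_le_self 2 (by omega)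
  have hlt : n < 2 * 2 ^ h := by
    rw [← pow_succ', hh]; exact Nat.lt_pow_succ_log_self one_lt_two n
  obtain ⟨m, rfl⟩ : ∃ m, h = m + 1 :=
    ⟨h - 1, by have := hh ▸ Nat.le_log_of_pow_le (x := 1) one_lt_two (by simpa using hn); omega⟩
  have hcount : {s : ℕ | 1 ≤ s ∧ s ≤ n ∧ ∃ d : ℕ, s / 2 ^ d = 2}.ncard =
      2 ^ m - 1 + min (n + 1 - 2 ^ (m + 1)) (2 ^ m) := by
    rw [ncard_descendants (by norm_num) hlt]
    exact sum_layers_of_two hpow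
  have : 1 ≤ 2 ^ m := Nat.one_le_two_pow
  simp only [Nat.add_one_sub_one] at hcount ⊢
  omega
end

section
/- Let x_min, p, q, x_max be real numbers with x_min ≤ p < q ≤ x_max, and let θ₁,…,θ_k ∈ ℝ² be points with 0 < y(θ₁) < y(θ₂) < ⋯ < y(θ_k). Fix t with 0 ≤ t ≤ k and suppose that x(θ_s) ∉ [p,q] for every s ≤ t. Define α_t = max({x_min} ∪ {x(θ_s) : s ≤ t, x(θ_s) < p}) and β_t = min({x_max} ∪ {x(θ_s) : s ≤ t, x(θ_s) > q}). Then α_t ≤ p < q ≤ β_t, and no point θ_s (1 ≤ s ≤ k) lies in the open region (α_t, β_t) × (0, Y), where Y = y(θ_{t+1}) if t < k and Y = +∞ if t = k. (This is the invariant of the bottom-up sweep in the largest-red-rectangle algorithm: after processing the first t blue points, the rectangle with horizontal span [α_t, β_t], bottom side on the x-axis containing the candidate pair, and top side at the next blue point has no blue point in its interior.) -/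
theorem stmt9 (k t : ℕ) (xmin p q xmax : ℝ) (θ : Fin k → ℝ × ℝ)
    (hxmin : xmin ≤ p) (hpq : p < q) (hxmax : q ≤ xmax)
    (hy0 : ∀ s : Fin k, 0 < (θ s).2)
    (hymono : ∀ s s' : Fin k, s < s' → (θ s).2 < (θ s').2)
    (htk : t ≤ k)
    (hout : ∀ s : Fin k, (s : ℕ) < t → (θ s).1 ∉ Set.Icc p q) :
    let A : Finset ℝ := insert xmin
      ((Finset.univ.filter (fun s : Fin k => (s : ℕ) < t ∧ (θ s).1 < p)).image
        fun s => (θ s).1)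
    let B : Finset ℝ := insert xmax
      ((Finset.univ.filter (fun s : Fin k => (s : ℕ) < t ∧ q < (θ s).1)).image
        fun s => (θ s).1)
    let α : ℝ := A.max' (Finset.insert_nonempty _ _)
    let β : ℝ := B.min' (Finset.insert_nonempty _ _)
    let Y : EReal := if ht' : t < k then ((θ ⟨t, ht'⟩).2 : EReal) else ⊤
    α ≤ p ∧ p < q ∧ q ≤ β ∧
    ∀ s : Fin k,
      ¬(α < (θ s).1 ∧ (θ s).1 < β ∧ (0 : EReal) < ((θ s).2 : EReal) ∧
        ((θ s).2 : EReal) < Y) := by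
  intro A B α β Y
  have hαp : α ≤ p := by
    apply Finset.max'_le
    intro x hx
    rcases Finset.mem_insert.mp hx with rfl | hx
    · exact hxmin
    · obtain ⟨s, hs, rfl⟩ := Finset.mem_image.mp hx
      exact le_of_lt (Finset.mem_filter.mp hs).2.2
  have hqβ : q ≤ β := by
    apply Finset.le_min'
    intro x hx
    rcases Finset.mem_insert.mp hx with rfl | hx
    · exact hxmax
    · obtain ⟨s, hs, rfl⟩ := Finset.mem_image.mp hx
      exact le_of_lt (Finset.mem_filter.mp hs).2.2
  refine ⟨hαp, hpq, hqβ, ?_⟩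
  rintro s ⟨h1, h2, _, h4⟩
  have hst : (s : ℕ) < t := by
    by_contra h
    push_neg at h
    simp only [Y] at h4
    split_ifs at h4 with ht'
    · have hts : (⟨t, ht'⟩ : Fin k) ≤ s := h
      have : (θ ⟨t, ht'⟩).2 ≤ (θ s).2 := by
        rcases lt_or_eq_of_le hts with hlt | heq
        · exact le_of_lt (hymono _ _ hlt)
        · rw [heq]
      have h4' : (θ s).2 < (θ ⟨t, ht'⟩).2 := by exact_mod_cast h4
      linarith
    · exact absurd (lt_of_le_of_lt h s.isLt) ht'
  have hout' := hout s hst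
  rcases lt_or_ge (θ s).1 p with hlt | hge
  · have hmem : (θ s).1 ∈ A := by
      apply Finset.mem_insert_of_mem
      exact Finset.mem_image_of_mem _ (Finset.mem_filter.mpr ⟨Finset.mem_univ _, hst, hlt⟩)
    have := Finset.le_max' A _ hmem
    linarith
  · have hq : q < (θ s).1 := by
      by_contra hc
      push_neg at hc
      exact hout' ⟨hge, hc⟩
    have hmem : (θ s).1 ∈ B := by
      apply Finset.mem_insert_of_mem
      exact Finset.mem_image_of_mem _ (Finset.mem_filter.mpr ⟨Finset.mem_univ _, hst, hq⟩)
    have := Finset.min'_le B _ hmem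
    linarith
end
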